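/- For γ > 0, m > 0, and 0 < ε < 1/2 (so that Q⁻¹(ε) > 0), the finite-blocklength rate R(γ) = log₂(1+γ) − √(V(γ)/m)·Q⁻¹(ε) with V(γ) = (2γ/(1+γ))(log₂ e)² satisfies R(γ) ≥ (1 − Q⁻¹(ε)ρ(γ̃)/√m)·log₂(1+γ) − (Q⁻¹(ε)η(γ̃)/√m)·log₂ e for any γ̃ > 0, where ρ and η are as in Lemma 1. -/

import Mathlib

/-!
Since `Q(0) = 1/2` and `Q` is antitone, `Q(q) < 1/2` forces `q ≥ 0`, so it suffices to bound
`√(2γ/(1+γ))` from above by `ρ(γ̃) ln(1+γ) + η(γ̃)`. This is the tangent line at `γ̃` of the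
concave function `t ↦ √(2(1 - e⁻ᵗ))` in the variable `t = ln(1+γ)`; concretely it follows from
AM-GM together with `ln(1+γ) - ln(1+γ̃) ≥ (γ - γ̃)/(1+γ)`.
-/

open Real

noncomputable def gaussianQ (x : ℝ) : ℝ :=
  ∫ u in Set.Ioi x, (1 / Real.sqrt (2 * Real.pi)) * Real.exp (-u ^ 2 / 2)

theorem integrable_gaussianDensity :
    MeasureTheory.Integrable fun u : ℝ => 1 / √(2 * π) * exp (-u ^ 2 / 2) := by
  simpa [neg_div, div_eq_inv_mul] using
    (integrable_exp_neg_mul_sq (b := 1 / 2) (by norm_num)).const_mul (1 / √(2 * π))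

theorem gaussianQ_zero : gaussianQ 0 = 1 / 2 := by
  have hexp : ∀ u : ℝ, exp (-u ^ 2 / 2) = exp (-(1 / 2) * u ^ 2) := fun u => by ring_nf
  simp only [gaussianQ, hexp, MeasureTheory.integral_const_mul, integral_gaussian_Ioi]
  rw [show π / (1 / 2) = 2 * π by ring]
  have : 0 < √(2 * π) := by positivity
  field_simp

theorem gaussianQ_antitone : Antitone gaussianQ := fun _ _ hxy =>
  MeasureTheory.setIntegral_mono_set integrable_gaussianDensity.integrableOn
    (.of_forall fun _ => by positivity) (.of_forall (Set.Ioi_subset_Ioi hxy))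

theorem nonneg_of_gaussianQ_lt_half {q : ℝ} (hq : gaussianQ q < 1 / 2) : 0 ≤ q := by
  by_contra! hneg
  have := gaussianQ_antitone hneg.le
  rw [gaussianQ_zero] at this
  linarith

theorem sub_div_one_add_le_log_sub_log {x y : ℝ} (hx : -1 < x) (hy : -1 < y) :
    (x - y) / (1 + x) ≤ log (1 + x) - log (1 + y) := by
  have hx' : 0 < 1 + x := by linarith
  have hy' : 0 < 1 + y := by linarith
  have := one_sub_inv_le_log_of_pos (div_pos hx' hy')
  rw [log_div hx'.ne' hy'.ne', inv_div] at this
  calc (x - y) / (1 + x) = 1 - (1 + y) / (1 + x) := by field_simp; ring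
    _ ≤ _ := this

theorem sqrt_two_mul_mul_sqrt_two_mul_le {x y : ℝ} (hx : 0 ≤ x) (hy : 0 ≤ y) :
    √(2 * x * (1 + x)) * √(2 * y * (1 + y)) ≤ x * (1 + y) + y * (1 + x) := by
  rw [← sqrt_mul (by positivity), sqrt_le_iff]
  exact ⟨by positivity, by nlinarith [sq_nonneg (x * (1 + y) - y * (1 + x))]⟩

theorem sqrt_two_mul_div_one_add_le {x y : ℝ} (hx : 0 ≤ x) (hy : 0 < y) :
    √(2 * x / (1 + x)) ≤ √(2 * y / (1 + y)) + (x - y) / ((1 + x) * √(2 * y * (1 + y))) := by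
  have hxs : √(2 * x / (1 + x)) * (1 + x) = √(2 * x * (1 + x)) := by
    rw [show 2 * x * (1 + x) = 2 * x / (1 + x) * (1 + x) ^ 2 by field_simp,
      sqrt_mul (by positivity), sqrt_sq (by linarith)]
  have hys : √(2 * y / (1 + y)) * √(2 * y * (1 + y)) = 2 * y := by
    rw [← sqrt_mul (by positivity), show 2 * y / (1 + y) * (2 * y * (1 + y)) = (2 * y) ^ 2 by
      field_simp, sqrt_sq (by positivity)]
  rw [← sub_le_iff_le_add', le_div_iff₀ (by positivity)]
  linear_combination √(2 * y * (1 + y)) * hxs - (1 + x) * hys +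
    sqrt_two_mul_mul_sqrt_two_mul_le hx hy.le

theorem sqrt_two_mul_div_one_add_le_tangent {x y : ℝ} (hx : 0 ≤ x) (hy : 0 < y) :
    √(2 * x / (1 + x)) ≤ 1 / √(2 * y * (1 + y)) * log (1 + x) +
      (√(2 * y / (1 + y)) - 1 / √(2 * y * (1 + y)) * log (1 + y)) := by
  calc √(2 * x / (1 + x))
      ≤ √(2 * y / (1 + y)) + (x - y) / (1 + x) / √(2 * y * (1 + y)) := by
        rw [div_div]; exact sqrt_two_mul_div_one_add_le hx hy
    _ ≤ √(2 * y / (1 + y)) + (log (1 + x) - log (1 + y)) / √(2 * y * (1 + y)) := by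
        gcongr; exact sub_div_one_add_le_log_sub_log (by linarith) (by linarith)
    _ = _ := by ring

theorem finite_blocklength_rate_lower_bound_general
    (γ m ε q : ℝ) (hγ : 0 < γ) (hε' : ε < 1 / 2)
    (hq : gaussianQ q = ε) (γt : ℝ) (hγt : 0 < γt) :
    let ρ : ℝ := 1 / Real.sqrt (2 * γt * (1 + γt))
    let η : ℝ := Real.sqrt (2 * γt / (1 + γt)) - ρ * Real.log (1 + γt)
    let V : ℝ := (2 * γ / (1 + γ)) * (Real.logb 2 (Real.exp 1)) ^ 2
    Real.logb 2 (1 + γ) - Real.sqrt (V / m) * q ≥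
      (1 - q * ρ / Real.sqrt m) * Real.logb 2 (1 + γ) -
        (q * η / Real.sqrt m) * Real.logb 2 (Real.exp 1) := by
  intro ρ η V
  have hq0 : 0 ≤ q := nonneg_of_gaussianQ_lt_half (hq ▸ hε')
  have hL : 0 < logb 2 (exp 1) := logb_pos one_lt_two (one_lt_exp_iff.2 one_pos)
  have hlogb : logb 2 (1 + γ) = log (1 + γ) * logb 2 (exp 1) := by
    simp only [logb, log_exp]; ring
  have hV : √(V / m) = √(2 * γ / (1 + γ)) * logb 2 (exp 1) / √m := by
    rw [sqrt_div (by positivity), sqrt_mul (by positivity), sqrt_sq hL.le]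
  have htangent : √(2 * γ / (1 + γ)) ≤ ρ * log (1 + γ) + η := by
    linarith [sqrt_two_mul_div_one_add_le_tangent hγ.le hγt]
  rw [hV, hlogb, ge_iff_le]
  linear_combination mul_le_mul_of_nonneg_left htangent
    (by positivity : 0 ≤ q * logb 2 (exp 1) / √m)

theorem finite_blocklength_rate_lower_bound
    (γ m ε q : ℝ) (hγ : 0 < γ) (hm : 0 < m) (hε : 0 < ε) (hε' : ε < 1 / 2)
    (hq : gaussianQ q = ε) (γt : ℝ) (hγt : 0 < γt) :
    let ρ : ℝ := 1 / Real.sqrt (2 * γt * (1 + γt))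
    let η : ℝ := Real.sqrt (2 * γt / (1 + γt)) - ρ * Real.log (1 + γt)
    let V : ℝ := (2 * γ / (1 + γ)) * (Real.logb 2 (Real.exp 1)) ^ 2
    Real.logb 2 (1 + γ) - Real.sqrt (V / m) * q ≥
      (1 - q * ρ / Real.sqrt m) * Real.logb 2 (1 + γ) -
        (q * η / Real.sqrt m) * Real.logb 2 (Real.exp 1) :=
  finite_blocklength_rate_lower_bound_general γ m ε q hγ hε' hq γt hγt
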